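/- arXiv:1904.02081 — 2 statements merged into one kernel-verified Lean document; each statement's English description precedes it below -/
import Mathlib

section
/- Let K ⊆ ℝ^d be a compact set, α ∈ (0,1), n ≥ 1, and k an integer with k > (d+n)/α. Let F : K → ℝ^{k×n} be α-Hölder continuous such that for each x ∈ K the linear map F_x : ℝ^n → ℝ^k is injective. For a ∈ ℝ^{k-1} let P_a : ℝ^k → ℝ^{k-1} be given by P_a(y) = (y_1 - a_1 y_k, ..., y_{k-1} - a_{k-1} y_k). Then the set of a ∈ ℝ^{k-1} for which P_a ∘ F_x fails to be injective for some x ∈ K has (k-1)-dimensional Lebesgue measure zero. -/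
open MeasureTheory Set
open scoped ENNReal NNReal

section Aux

/-- `t ≤ R^(1-α) * t^α` for `0 ≤ t ≤ R`. -/
lemma aux_le_rpow {t R α : ℝ} (ht : 0 ≤ t) (htR : t ≤ R) (hα : 0 < α) (hα1 : α ≤ 1) :
    t ≤ R ^ (1 - α) * t ^ α := by
  rcases eq_or_lt_of_le ht with h | h
  · rw [← h, Real.zero_rpow hα.ne', mul_zero]
  · have hR : 0 < R := lt_of_lt_of_le h htR
    calc t = t ^ (1 - α) * t ^ α := by
            rw [← Real.rpow_add h, sub_add_cancel, Real.rpow_one]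
      _ ≤ R ^ (1 - α) * t ^ α :=
            mul_le_mul_of_nonneg_right (Real.rpow_le_rpow ht htR (by linarith))
              (Real.rpow_nonneg ht α)

lemma aux_holderOnWith {X Y : Type*} [MetricSpace X] [MetricSpace Y] {f : X → Y} {s : Set X}
    {A α : ℝ} (hA : 0 ≤ A) (hα : 0 < α)
    (h : ∀ p ∈ s, ∀ q ∈ s, dist (f p) (f q) ≤ A * dist p q ^ α) :
    HolderOnWith A.toNNReal α.toNNReal f s := by
  intro p hp q hq
  have h1 : edist (f p) (f q) = ENNReal.ofReal (dist (f p) (f q)) := edist_dist _ _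
  have h2 : edist p q = ENNReal.ofReal (dist p q) := edist_dist _ _
  rw [h1, h2]
  calc ENNReal.ofReal (dist (f p) (f q)) ≤ ENNReal.ofReal (A * dist p q ^ α) :=
        ENNReal.ofReal_le_ofReal (h p hp q hq)
    _ = ENNReal.ofReal A * ENNReal.ofReal (dist p q ^ α) := ENNReal.ofReal_mul hA
    _ = ↑A.toNNReal * ENNReal.ofReal (dist p q) ^ (α.toNNReal : ℝ) := by
        rw [← ENNReal.ofReal_rpow_of_nonneg dist_nonneg hα.le]
        rw [Real.coe_toNNReal _ hα.le]
        rfl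

lemma aux_div_sub_div {a1 b1 a2 b2 M δ : ℝ} (hδ : 0 < δ) (hb1 : δ ≤ |b1|) (hb2 : δ ≤ |b2|)
    (ha2 : |a2| ≤ M) (hb2M : |b2| ≤ M) :
    |a1 / b1 - a2 / b2| ≤ M / δ ^ 2 * (|a1 - a2| + |b1 - b2|) := by
  have hb1' : b1 ≠ 0 := by
    intro h; rw [h, abs_zero] at hb1; linarith
  have hb2' : b2 ≠ 0 := by
    intro h; rw [h, abs_zero] at hb2; linarith
  rw [div_sub_div a1 a2 hb1' hb2']
  rw [abs_div]
  have hnum : |a1 * b2 - b1 * a2| ≤ M * (|a1 - a2| + |b1 - b2|) := by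
    have : a1 * b2 - b1 * a2 = (a1 - a2) * b2 + a2 * (b2 - b1) := by ring
    rw [this]
    calc |(a1 - a2) * b2 + a2 * (b2 - b1)| ≤ |(a1 - a2) * b2| + |a2 * (b2 - b1)| := abs_add_le _ _
      _ = |a1 - a2| * |b2| + |a2| * |b2 - b1| := by rw [abs_mul, abs_mul]
      _ ≤ |a1 - a2| * M + M * |b1 - b2| := by
          rw [abs_sub_comm b2 b1]
          have hM : 0 ≤ M := (abs_nonneg a2).trans ha2
          gcongr
      _ = M * (|a1 - a2| + |b1 - b2|) := by ring
  have hden : δ ^ 2 ≤ |b1 * b2| := by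
    rw [abs_mul]
    calc δ ^ 2 = δ * δ := sq δ
      _ ≤ |b1| * |b2| := mul_le_mul hb1 hb2 hδ.le (abs_nonneg b1)
  calc |a1 * b2 - b1 * a2| / |b1 * b2| ≤ M * (|a1 - a2| + |b1 - b2|) / δ ^ 2 := by
        have hM : 0 ≤ M := (abs_nonneg a2).trans ha2
        apply div_le_div₀ (by positivity) hnum (by positivity) hden
    _ = M / δ ^ 2 * (|a1 - a2| + |b1 - b2|) := by ring

end Aux

/-- Embedding of `ℝ^d × ℝ^{n-1}` onto the slice `{(x,v) : v j = 1}` of `ℝ^d × ℝ^n`. -/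
noncomputable def auxφ (d n : ℕ) (j : Fin n) :
    (Fin d → ℝ) × (Fin (n - 1) → ℝ) → (Fin d → ℝ) × (Fin n → ℝ) := fun q =>
  (q.1, fun i =>
    if h1 : i.val = j.val then 1
    else if h2 : i.val < j.val then q.2 ⟨i.val, by have := j.isLt; omega⟩
    else q.2 ⟨i.val - 1, by have hi := i.isLt; have hj := j.isLt; omega⟩)

lemma auxφ_lip (d n : ℕ) (j : Fin n) : LipschitzWith 1 (auxφ d n j) := by
  apply LipschitzWith.of_dist_le_mul
  intro p q
  rw [NNReal.coe_one, one_mul]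
  rw [show dist (auxφ d n j p) (auxφ d n j q)
      = max (dist (auxφ d n j p).1 (auxφ d n j q).1) (dist (auxφ d n j p).2 (auxφ d n j q).2)
      from Prod.dist_eq]
  apply max_le
  · rw [Prod.dist_eq]; exact le_max_left _ _
  · rw [dist_pi_le_iff dist_nonneg]
    intro i
    have hsnd : dist p.2 q.2 ≤ dist p q := by rw [Prod.dist_eq]; exact le_max_right _ _
    show dist ((auxφ d n j p).2 i) ((auxφ d n j q).2 i) ≤ dist p q
    simp only [auxφ]
    split_ifs with h1 h2
    · simp [dist_nonneg]
    · exact (dist_le_pi_dist p.2 q.2 _).trans hsnd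
    · exact (dist_le_pi_dist p.2 q.2 _).trans hsnd

lemma auxφ_surj (d n : ℕ) (j : Fin n) (x : Fin d → ℝ) (v : Fin n → ℝ) (hv : v j = 1) :
    (x, v) ∈ Set.range (auxφ d n j) := by
  refine ⟨(x, fun t => v (if h : t.val < j.val then ⟨t.val, by have := j.isLt; omega⟩
    else ⟨t.val + 1, by have := t.isLt; omega⟩)), ?_⟩
  apply Prod.ext
  · rfl
  · show (fun i => if h1 : i.val = j.val then (1:ℝ)
      else if h2 : i.val < j.val then _ else _) = v
    funext i
    dsimp only
    split_ifs with h1 h2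
    · rw [show i = j from Fin.ext h1] at *
      exact hv.symm
    · exact congrArg v (Fin.ext rfl)
    · omega
    · exact congrArg v (Fin.ext (by simp only []; omega))


/-- Whitney reduction lemma: if `F : K → ℝ^{k×n}` is `α`-Hölder with each `F_x` injective
and `αk > d + n`, then for a.e. `a ∈ ℝ^{k-1}` the maps `P_a ∘ F_x` are injective for all
`x ∈ K`; i.e. the set of bad `a` has Lebesgue measure zero. -/
theorem stmt5 (d n k : ℕ) (hn : 1 ≤ n) (α C : ℝ) (hα : 0 < α) (hα1 : α < 1) (hC : 0 < C)
    (hk : (d + n : ℝ) < α * k)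
    (K : Set (Fin d → ℝ)) (hK : IsCompact K)
    (F : K → (Fin k → Fin n → ℝ))
    (hF : ∀ x y : K, dist (F x) (F y) ≤ C * dist x y ^ α)
    (hFinj : ∀ x : K, Function.Injective fun v => (Matrix.of (F x)).mulVec v) :
    volume {a : Fin (k - 1) → ℝ | ∃ x : K,
      ¬ Function.Injective (fun v : Fin n → ℝ => fun i : Fin (k - 1) =>
          (Matrix.of (F x)).mulVec v (Fin.castLE (Nat.sub_le k 1) i)
            - a i * (Matrix.of (F x)).mulVec v ⟨k - 1, by
              have h0 : (0 : ℝ) < α * k := lt_of_le_of_lt (by positivity) hk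
              have hk0 : k ≠ 0 := by
                rintro rfl
                simp at h0
              omega⟩)} = 0 := by
  -- basic numerology
  have hn' : (1 : ℝ) ≤ n := by exact_mod_cast hn
  have hk2 : 2 ≤ k := by
    by_contra h
    push_neg at h
    have hk1 : (k : ℝ) ≤ 1 := by
      have : k ≤ 1 := by omega
      exact_mod_cast this
    have hd0 : (0 : ℝ) ≤ d := Nat.cast_nonneg d
    nlinarith
  -- the distinguished last index
  set lst : Fin k := ⟨k - 1, by omega⟩ with hlst
  -- handle the case of empty K
  by_cases hKe : K.Nonempty
  swap
  · have : {a : Fin (k - 1) → ℝ | ∃ x : K,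
      ¬ Function.Injective (fun v : Fin n → ℝ => fun i : Fin (k - 1) =>
          (Matrix.of (F x)).mulVec v (Fin.castLE (Nat.sub_le k 1) i)
            - a i * (Matrix.of (F x)).mulVec v lst)} = ∅ := by
      apply eq_empty_iff_forall_notMem.2
      rintro a ⟨x, -⟩
      exact hKe ⟨x.1, x.2⟩
    rw [this]
    exact measure_empty
  obtain ⟨x₀', hx₀'⟩ := hKe
  set x₀ : K := ⟨x₀', hx₀'⟩ with hx₀
  -- a bound on K
  obtain ⟨R₀, hR₀⟩ := Metric.isBounded_iff.1 hK.isBounded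
  set B : ℝ := max R₀ 2 with hB
  have hB2 : (2 : ℝ) ≤ B := le_max_right _ _
  have hB0 : (0 : ℝ) < B := by linarith
  have hdistK : ∀ x y : K, dist x y ≤ B := by
    intro x y
    rw [Subtype.dist_eq]
    exact (hR₀ x.2 y.2).trans (le_max_left _ _)
  -- entrywise bound on F
  set Mf : ℝ := ‖F x₀‖ + C * B ^ α with hMf
  have hMf0 : 0 ≤ Mf := by
    have : (0:ℝ) ≤ C * B ^ α := by positivity
    have := norm_nonneg (F x₀)
    linarith
  have eF : ∀ (x : K) (i : Fin k) (j : Fin n), |F x i j| ≤ Mf := by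
    intro x i j
    have h1 : |F x i j - F x₀ i j| ≤ dist (F x) (F x₀) := by
      rw [← Real.dist_eq]
      exact (dist_le_pi_dist (F x i) (F x₀ i) j).trans (dist_le_pi_dist (F x) (F x₀) i)
    have h2 : |F x₀ i j| ≤ ‖F x₀‖ :=
      (norm_le_pi_norm (F x₀ i) j).trans (norm_le_pi_norm (F x₀) i)
    have h3 : dist (F x) (F x₀) ≤ C * B ^ α := by
      refine (hF x x₀).trans ?_
      exact mul_le_mul_of_nonneg_left (Real.rpow_le_rpow dist_nonneg (hdistK x x₀) hα.le) hC.le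
    calc |F x i j| ≤ |F x i j - F x₀ i j| + |F x₀ i j| := by
          have := abs_sub_abs_le_abs_sub (F x i j) (F x₀ i j)
          have := abs_add_le (F x i j - F x₀ i j) (F x₀ i j)
          calc |F x i j| = |(F x i j - F x₀ i j) + F x₀ i j| := by ring_nf
            _ ≤ |F x i j - F x₀ i j| + |F x₀ i j| := abs_add_le _ _
      _ ≤ Mf := by rw [hMf]; linarith
  -- the main maps and sets
  set NN : K × (Fin n → ℝ) → Fin k → ℝ := fun p => (Matrix.of (F p.1)).mulVec p.2 with hNN
  set GG : K × (Fin n → ℝ) → Fin (k - 1) → ℝ :=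
    fun p i => NN p (Fin.castLE (Nat.sub_le k 1) i) / NN p lst with hGG
  set SS : Fin n → ℕ → Set (K × (Fin n → ℝ)) := fun j m =>
    {p | p.2 j = 1 ∧ (∀ i, |p.2 i| ≤ 1) ∧ 1 / ((m : ℝ) + 1) ≤ |NN p lst|} with hSS
  have hnull : volume (⋃ (j : Fin n) (m : ℕ), GG '' SS j m) = 0 := by
    refine measure_iUnion_null fun j => measure_iUnion_null fun m => ?_
    -- constants
    set δ : ℝ := 1 / ((m : ℝ) + 1) with hδ'
    have hδ : 0 < δ := by positivity
    set Mn : ℝ := n * Mf with hMn'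
    have hMn : 0 ≤ Mn := mul_nonneg (Nat.cast_nonneg n) hMf0
    set A1 : ℝ := n * C + n * Mf * B ^ (1 - α) with hA1'
    have hA1 : 0 ≤ A1 := add_nonneg (by positivity)
      (mul_nonneg (mul_nonneg (Nat.cast_nonneg n) hMf0) (Real.rpow_nonneg hB0.le _))
    set A2 : ℝ := Mn / δ ^ 2 * (2 * A1) with hA2'
    have hA2 : 0 ≤ A2 := mul_nonneg (div_nonneg hMn (by positivity)) (by linarith)
    -- coordinates of NN
    have hNcoord : ∀ p : K × (Fin n → ℝ), ∀ i, NN p i = ∑ j', F p.1 i j' * p.2 j' := by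
      intro p i
      rfl
    -- bound on NN
    have hNb : ∀ p : K × (Fin n → ℝ), (∀ i', |p.2 i'| ≤ 1) → ∀ i, |NN p i| ≤ Mn := by
      intro p hp i
      rw [hNcoord]
      calc |∑ j', F p.1 i j' * p.2 j'| ≤ ∑ j', |F p.1 i j' * p.2 j'| :=
            Finset.abs_sum_le_sum_abs _ _
        _ ≤ ∑ _j' : Fin n, Mf := by
            apply Finset.sum_le_sum
            intro j' _
            rw [abs_mul]
            calc |F p.1 i j'| * |p.2 j'| ≤ Mf * 1 :=
                  mul_le_mul (eF _ _ _) (hp j') (abs_nonneg _) hMf0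
              _ = Mf := mul_one Mf
        _ = n * Mf := by
            rw [Finset.sum_const, Finset.card_univ, Fintype.card_fin, nsmul_eq_mul]
    -- difference bound on NN
    have hNd : ∀ p q : K × (Fin n → ℝ), (∀ i', |p.2 i'| ≤ 1) → ∀ i,
        |NN p i - NN q i| ≤ n * C * dist p.1 q.1 ^ α + n * Mf * dist p.2 q.2 := by
      intro p q hp i
      rw [hNcoord, hNcoord, ← Finset.sum_sub_distrib]
      calc |∑ j', (F p.1 i j' * p.2 j' - F q.1 i j' * q.2 j')|
          ≤ ∑ j', |F p.1 i j' * p.2 j' - F q.1 i j' * q.2 j'| := Finset.abs_sum_le_sum_abs _ _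
        _ ≤ ∑ _j' : Fin n, (C * dist p.1 q.1 ^ α + Mf * dist p.2 q.2) := by
            apply Finset.sum_le_sum
            intro j' _
            have hsplit : F p.1 i j' * p.2 j' - F q.1 i j' * q.2 j'
                = (F p.1 i j' - F q.1 i j') * p.2 j' + F q.1 i j' * (p.2 j' - q.2 j') := by ring
            rw [hsplit]
            have h1 : |F p.1 i j' - F q.1 i j'| ≤ C * dist p.1 q.1 ^ α := by
              refine le_trans ?_ (hF p.1 q.1)
              rw [← Real.dist_eq]
              exact (dist_le_pi_dist (F p.1 i) (F q.1 i) j').trans (dist_le_pi_dist (F p.1) (F q.1) i)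
            have h2 : |p.2 j' - q.2 j'| ≤ dist p.2 q.2 := by
              rw [← Real.dist_eq]
              exact dist_le_pi_dist p.2 q.2 j'
            calc |(F p.1 i j' - F q.1 i j') * p.2 j' + F q.1 i j' * (p.2 j' - q.2 j')|
                ≤ |F p.1 i j' - F q.1 i j'| * |p.2 j'| + |F q.1 i j'| * |p.2 j' - q.2 j'| := by
                  refine (abs_add_le _ _).trans ?_
                  rw [abs_mul, abs_mul]
              _ ≤ (C * dist p.1 q.1 ^ α) * 1 + Mf * dist p.2 q.2 :=
                  add_le_add
                    (mul_le_mul h1 (hp j') (abs_nonneg _)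
                      (mul_nonneg hC.le (Real.rpow_nonneg dist_nonneg α)))
                    (mul_le_mul (eF _ _ _) h2 (abs_nonneg _) hMf0)
              _ = C * dist p.1 q.1 ^ α + Mf * dist p.2 q.2 := by ring
        _ = n * (C * dist p.1 q.1 ^ α + Mf * dist p.2 q.2) := by
            rw [Finset.sum_const, Finset.card_univ, Fintype.card_fin, nsmul_eq_mul]
        _ = n * C * dist p.1 q.1 ^ α + n * Mf * dist p.2 q.2 := by ring
    -- Hölder estimate for GG on SS j m
    have hGd : ∀ p ∈ SS j m, ∀ q ∈ SS j m, dist (GG p) (GG q) ≤ A2 * dist p q ^ α := by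
      intro p hp q hq
      obtain ⟨hpj, hple, hpδ⟩ := hp
      obtain ⟨hqj, hqle, hqδ⟩ := hq
      have hd1 : dist p.1 q.1 ≤ dist p q := by rw [Prod.dist_eq]; exact le_max_left _ _
      have hd2 : dist p.2 q.2 ≤ dist p q := by rw [Prod.dist_eq]; exact le_max_right _ _
      have hd2B : dist p.2 q.2 ≤ B := by
        refine le_trans ?_ hB2
        rw [dist_pi_le_iff (by norm_num : (0:ℝ) ≤ 2)]
        intro i'
        rw [Real.dist_eq]
        have e1 := abs_le.mp (hple i')
        have e2 := abs_le.mp (hqle i')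
        exact abs_le.mpr ⟨by linarith, by linarith⟩
      have hND : ∀ i, |NN p i - NN q i| ≤ A1 * dist p q ^ α := by
        intro i
        refine (hNd p q hple i).trans ?_
        have e1 : dist p.1 q.1 ^ α ≤ dist p q ^ α := Real.rpow_le_rpow dist_nonneg hd1 hα.le
        have e2 : dist p.2 q.2 ≤ B ^ (1 - α) * dist p q ^ α := by
          refine (aux_le_rpow dist_nonneg hd2B hα hα1.le).trans ?_
          exact mul_le_mul_of_nonneg_left (Real.rpow_le_rpow dist_nonneg hd2 hα.le)
            (Real.rpow_nonneg hB0.le _)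
        have hnC : (0:ℝ) ≤ (n:ℝ) * C := by positivity
        have hnMf : (0:ℝ) ≤ (n:ℝ) * Mf := mul_nonneg (Nat.cast_nonneg n) hMf0
        calc (n:ℝ) * C * dist p.1 q.1 ^ α + n * Mf * dist p.2 q.2
            ≤ n * C * dist p q ^ α + n * Mf * (B ^ (1-α) * dist p q ^ α) := by
              refine add_le_add ?_ ?_
              · rw [mul_assoc, mul_assoc]
                exact mul_le_mul_of_nonneg_left
                  (mul_le_mul_of_nonneg_left e1 hC.le) (Nat.cast_nonneg n)
              · rw [mul_assoc ((n:ℝ)) Mf, mul_assoc ((n:ℝ)) Mf]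
                exact mul_le_mul_of_nonneg_left
                  (mul_le_mul_of_nonneg_left e2 hMf0) (Nat.cast_nonneg n)
          _ = A1 * dist p q ^ α := by rw [hA1']; ring
      rw [dist_pi_le_iff (mul_nonneg hA2 (Real.rpow_nonneg dist_nonneg α))]
      intro i
      rw [Real.dist_eq]
      have hcoord := aux_div_sub_div (a1 := NN p (Fin.castLE (Nat.sub_le k 1) i)) hδ hpδ hqδ
        (hNb q hqle (Fin.castLE (Nat.sub_le k 1) i)) (hNb q hqle lst)
      calc |GG p i - GG q i|
          = |NN p (Fin.castLE (Nat.sub_le k 1) i) / NN p lst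
            - NN q (Fin.castLE (Nat.sub_le k 1) i) / NN q lst| := rfl
        _ ≤ Mn / δ^2 * (|NN p (Fin.castLE (Nat.sub_le k 1) i) - NN q (Fin.castLE (Nat.sub_le k 1) i)|
            + |NN p lst - NN q lst|) := hcoord
        _ ≤ Mn / δ^2 * (A1 * dist p q ^ α + A1 * dist p q ^ α) :=
            mul_le_mul_of_nonneg_left (add_le_add (hND _) (hND _)) (div_nonneg hMn (by positivity))
        _ = A2 * dist p q ^ α := by rw [hA2']; ring
    have hHolder : HolderOnWith A2.toNNReal α.toNNReal GG (SS j m) := aux_holderOnWith hA2 hα hGd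
    -- dimension bound for SS j m
    have hdim : dimH (SS j m) ≤ ((d + (n - 1) : ℕ) : ℝ≥0∞) := by
      have hiso : Isometry (fun p : K × (Fin n → ℝ) => ((p.1 : Fin d → ℝ), p.2)) := by
        apply Isometry.of_dist_eq
        intro p q
        rw [Prod.dist_eq, Prod.dist_eq, Subtype.dist_eq]
      rw [← hiso.dimH_image]
      have hsub : (fun p : K × (Fin n → ℝ) => ((p.1 : Fin d → ℝ), p.2)) '' SS j m
          ⊆ Set.range (auxφ d n j) := by
        rintro _ ⟨p, hp, rfl⟩
        exact auxφ_surj d n j p.1 p.2 hp.1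
      refine (dimH_mono hsub).trans ?_
      refine (LipschitzWith.dimH_range_le (auxφ_lip d n j)).trans ?_
      rw [Real.dimH_univ_eq_finrank]
      have hfr : Module.finrank ℝ ((Fin d → ℝ) × (Fin (n - 1) → ℝ)) = d + (n - 1) := by
        rw [Module.finrank_prod, Module.finrank_fin_fun, Module.finrank_fin_fun]
      rw [hfr]
    -- conclude
    have hac : (volume : Measure (Fin (k-1) → ℝ)) ≪ μH[(((k - 1 : ℕ) : ℝ≥0) : ℝ)] := by
      have hvol : (μH[((k - 1 : ℕ) : ℝ)] : Measure (Fin (k-1) → ℝ)) = volume := by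
        simpa using hausdorffMeasure_pi_real (ι := Fin (k - 1))
      rw [show (((k-1:ℕ):ℝ≥0):ℝ) = ((k-1:ℕ):ℝ) from NNReal.coe_natCast _, hvol]
    refine measure_zero_of_dimH_lt hac ?_
    refine lt_of_le_of_lt ((hHolder.dimH_image_le (Real.toNNReal_pos.mpr hα)).trans
      (ENNReal.div_le_div_right hdim _)) ?_
    rw [ENNReal.div_lt_iff (Or.inl (by simpa using (Real.toNNReal_pos.mpr hα).ne'))
      (Or.inl ENNReal.coe_ne_top)]
    have hreal : ((d + (n - 1) : ℕ) : ℝ) < ((k - 1 : ℕ) : ℝ) * α := by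
      rw [Nat.cast_add, Nat.cast_sub hn, Nat.cast_sub (by omega : 1 ≤ k)]
      push_cast
      nlinarith
    have hnn : ((d + (n - 1) : ℕ) : ℝ≥0) < ((k - 1 : ℕ) : ℝ≥0) * α.toNNReal := by
      rw [← NNReal.coe_lt_coe, NNReal.coe_mul, NNReal.coe_natCast, NNReal.coe_natCast,
        Real.coe_toNNReal _ hα.le]
      exact hreal
    calc ((d + (n-1):ℕ) : ℝ≥0∞) = (((d + (n-1):ℕ) : ℝ≥0) : ℝ≥0∞) := by simp
      _ < (((k - 1 : ℕ) : ℝ≥0) : ℝ≥0∞) * (α.toNNReal : ℝ≥0∞) := by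
          rw [← ENNReal.coe_mul]
          exact_mod_cast hnn
  refine measure_mono_null ?_ hnull
  rintro a ⟨x, hni⟩
  rw [Function.not_injective_iff] at hni
  obtain ⟨v, w, hvw, hne⟩ := hni
  set u : Fin n → ℝ := v - w with hu'
  have hu : u ≠ 0 := sub_ne_zero.mpr hne
  have key : ∀ i : Fin (k - 1),
      ((Matrix.of (F x)).mulVec u) (Fin.castLE (Nat.sub_le k 1) i)
        = a i * ((Matrix.of (F x)).mulVec u) lst := by
    intro i
    have h1 : (Matrix.of (F x)).mulVec v (Fin.castLE (Nat.sub_le k 1) i)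
          - a i * (Matrix.of (F x)).mulVec v lst
        = (Matrix.of (F x)).mulVec w (Fin.castLE (Nat.sub_le k 1) i)
          - a i * (Matrix.of (F x)).mulVec w lst := congrFun hvw i
    rw [hu', Matrix.mulVec_sub]
    simp only [Pi.sub_apply]
    linarith
  set w0 : Fin k → ℝ := (Matrix.of (F x)).mulVec u with hw0'
  have hw0 : w0 ≠ 0 := by
    intro h
    apply hu
    apply hFinj x
    show (Matrix.of (F x)).mulVec u = (Matrix.of (F x)).mulVec 0
    rw [Matrix.mulVec_zero]
    exact h
  have hlastne : w0 lst ≠ 0 := by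
    intro h0
    apply hw0
    funext jj
    rcases lt_or_ge jj.val (k - 1) with hj | hj
    · have hjj : jj = Fin.castLE (Nat.sub_le k 1) ⟨jj.val, hj⟩ := Fin.ext rfl
      rw [hjj]
      have hkey := key ⟨jj.val, hj⟩
      rw [h0, mul_zero] at hkey
      simpa using hkey
    · have hjj : jj = lst := Fin.ext (by simp only [hlst]; omega)
      rw [hjj, h0]
      rfl
  haveI : Nonempty (Fin n) := ⟨⟨0, hn⟩⟩
  obtain ⟨j, -, hjmax⟩ := Finset.exists_max_image Finset.univ (fun i => |u i|) Finset.univ_nonempty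
  have huj : u j ≠ 0 := by
    obtain ⟨i, hi⟩ := Function.ne_iff.mp hu
    intro h
    have hle := hjmax i (Finset.mem_univ i)
    rw [h, abs_zero] at hle
    exact hi (abs_nonpos_iff.mp hle)
  set v' : Fin n → ℝ := (u j)⁻¹ • u with hv'
  have hv'j : v' j = 1 := by
    simp only [hv', Pi.smul_apply, smul_eq_mul]
    exact inv_mul_cancel₀ huj
  have hv'le : ∀ i, |v' i| ≤ 1 := by
    intro i
    simp only [hv', Pi.smul_apply, smul_eq_mul, abs_mul, abs_inv]
    calc |u j|⁻¹ * |u i| ≤ |u j|⁻¹ * |u j| :=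
          mul_le_mul_of_nonneg_left (hjmax i (Finset.mem_univ i)) (by positivity)
      _ = 1 := inv_mul_cancel₀ (abs_ne_zero.mpr huj)
  have hNv' : NN (⟨x, v'⟩ : K × (Fin n → ℝ)) = (u j)⁻¹ • w0 := by
    show (Matrix.of (F x)).mulVec ((u j)⁻¹ • u) = (u j)⁻¹ • w0
    rw [Matrix.mulVec_smul]
  have hNl : NN (⟨x, v'⟩ : K × (Fin n → ℝ)) lst ≠ 0 := by
    rw [hNv']
    simp only [Pi.smul_apply, smul_eq_mul]
    exact mul_ne_zero (inv_ne_zero huj) hlastne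
  have ht : 0 < |NN (⟨x, v'⟩ : K × (Fin n → ℝ)) lst| := abs_pos.mpr hNl
  obtain ⟨m, hm⟩ := exists_nat_gt (1 / |NN (⟨x, v'⟩ : K × (Fin n → ℝ)) lst|)
  have hδm : 1 / ((m : ℝ) + 1) ≤ |NN (⟨x, v'⟩ : K × (Fin n → ℝ)) lst| := by
    rw [div_le_iff₀ (by positivity)]
    rw [div_lt_iff₀ ht] at hm
    nlinarith
  refine mem_iUnion.2 ⟨j, mem_iUnion.2 ⟨m, ⟨(⟨x, v'⟩ : K × (Fin n → ℝ)), ⟨hv'j, hv'le, hδm⟩, ?_⟩⟩⟩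
  funext i
  show NN (⟨x, v'⟩ : K × (Fin n → ℝ)) (Fin.castLE (Nat.sub_le k 1) i)
      / NN (⟨x, v'⟩ : K × (Fin n → ℝ)) lst = a i
  rw [hNv']
  simp only [Pi.smul_apply, smul_eq_mul]
  rw [mul_div_mul_left _ _ (inv_ne_zero huj)]
  rw [key i]
  exact mul_div_cancel_right₀ (a i) hlastne
end

section
/- Let K ⊆ ℝ^d be compact with d ≥ 1, α ∈ (0,1), and let n ≥ 1, k be integers with k > (d+n)/α. Suppose F : K → ℝ^{k×n} is α-Hölder and each F_x is injective. Define f : K × ℝ^n → ℝ^k by f(x,v) = F_x v. Then the set ∪_{x∈K} range(F_x) = range(f) is closed under multiplication by nonnegative scalars and has k-dimensional Hausdorff measure zero. -/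
/-!
On the unit ball around any point of `K × ℝⁿ`, the map `f (x, v) = F_x v` is `α`-Hölder:
`F_x v - F_y w = (F_x - F_y) v + F_y (v - w)`, the first term is controlled by the Hölder
bound on `F` and the bound on `v`, and the second by the boundedness of `F_y` and the fact
that a Lipschitz map on a bounded set is `α`-Hölder for `α ≤ 1`. A locally `α`-Hölder map
raises Hausdorff dimension by at most the factor `1 / α`, so
`dimH (range f) ≤ (d + n) / α < k` and `μH[k] (range f) = 0`.
-/

open MeasureTheory Set Bornology
open scoped NNReal ENNReal Topology

section Holder

variable {X Y : Type*} [PseudoMetricSpace X] [PseudoMetricSpace Y] {C r : ℝ≥0} {f : X → Y}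
  {s : Set X}

theorem HolderOnWith.of_dist_le
    (h : ∀ x ∈ s, ∀ y ∈ s, dist (f x) (f y) ≤ C * dist x y ^ (r : ℝ)) :
    HolderOnWith C r f s := by
  intro x hx y hy
  rw [edist_dist, edist_dist, ENNReal.ofReal_rpow_of_nonneg dist_nonneg r.coe_nonneg,
    ← ENNReal.ofReal_coe_nnreal, ← ENNReal.ofReal_mul C.coe_nonneg]
  exact ENNReal.ofReal_le_ofReal (h x hx y hy)

theorem HolderWith.of_dist_le (h : ∀ x y, dist (f x) (f y) ≤ C * dist x y ^ (r : ℝ)) :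
    HolderWith C r f :=
  holderOnWith_univ.1 <| .of_dist_le fun x _ y _ => h x y

theorem HolderOnWith.isBounded_image (hf : HolderOnWith C r f s) (hs : IsBounded s) :
    IsBounded (f '' s) := by
  rw [Metric.isBounded_iff_ediam_ne_top] at hs ⊢
  refine ne_top_of_le_ne_top ?_ hf.ediam_image_le
  exact ENNReal.mul_ne_top ENNReal.coe_ne_top (ENNReal.rpow_ne_top_of_nonneg r.coe_nonneg hs)

theorem LipschitzWith.comp_holderWith {Z : Type*} [PseudoMetricSpace Z] {K : ℝ≥0} {g : Y → Z}
    (hg : LipschitzWith K g) (hf : HolderWith C r f) : HolderWith (K * C) r (g ∘ f) := by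
  simpa using (holderWith_one.2 hg).comp hf

end Holder

section Apply

variable {𝕜 X E F : Type*} [NontriviallyNormedField 𝕜] [PseudoMetricSpace X]
  [SeminormedAddCommGroup E] [SeminormedAddCommGroup F] [NormedSpace 𝕜 E] [NormedSpace 𝕜 F]

theorem HolderOnWith.clm_apply {u : X → E →L[𝕜] F} {w : X → E} {s : Set X} {Cu Cw A B r : ℝ≥0}
    (hu : HolderOnWith Cu r u s) (hw : HolderOnWith Cw r w s)
    (hA : ∀ x ∈ s, ‖u x‖ ≤ A) (hB : ∀ x ∈ s, ‖w x‖ ≤ B) :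
    HolderOnWith (Cu * B + A * Cw) r (fun x => u x (w x)) s := by
  refine .of_dist_le fun x hx y hy => ?_
  have hsplit : u x (w x) - u y (w y) = (u x - u y) (w x) + u y (w x - w y) := by
    rw [sub_apply, map_sub]; abel
  calc dist (u x (w x)) (u y (w y))
      ≤ ‖u x - u y‖ * ‖w x‖ + ‖u y‖ * ‖w x - w y‖ := by
        rw [dist_eq_norm, hsplit]
        exact norm_add_le_of_le ((u x - u y).le_opNorm _) ((u y).le_opNorm _)
    _ ≤ Cu * dist x y ^ (r : ℝ) * B + A * (Cw * dist x y ^ (r : ℝ)) := by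
        rw [← dist_eq_norm, ← dist_eq_norm]
        gcongr
        exacts [hu.dist_le hx hy, hB x hx, hA y hy, hw.dist_le hx hy]
    _ = ↑(Cu * B + A * Cw) * dist x y ^ (r : ℝ) := by push_cast; ring

theorem HolderWith.exists_holderOnWith_clm_apply {Φ : X → E →L[𝕜] F} {C r : ℝ≥0}
    (hΦ : HolderWith C r Φ) (hr : r ≤ 1) (p : X × E) :
    ∃ C' : ℝ≥0, ∃ s ∈ 𝓝 p, HolderOnWith C' r (fun q : X × E => Φ q.1 q.2) s := by
  set s := Metric.ball p 1
  have hs : IsBounded s := Metric.isBounded_ball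
  have hu : HolderOnWith C r (fun q : X × E => Φ q.1) s := by
    simpa [Function.comp_def] using
      (hΦ.comp (holderWith_one.2 LipschitzWith.prod_fst)).holderOnWith s
  obtain ⟨Cw, hw⟩ : ∃ Cw, HolderOnWith Cw r (fun q : X × E => q.2) s :=
    HolderOnWith.exists_holderOnWith_of_le
      ⟨1, holderOnWith_one.2 LipschitzWith.prod_snd.lipschitzOnWith⟩ hr hs
  obtain ⟨A, hA₀, hA⟩ := (hu.isBounded_image hs).exists_pos_norm_le
  obtain ⟨B, hB₀, hB⟩ := (hw.isBounded_image hs).exists_pos_norm_le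
  lift A to ℝ≥0 using hA₀.le
  lift B to ℝ≥0 using hB₀.le
  exact ⟨_, s, Metric.ball_mem_nhds p one_pos,
    hu.clm_apply hw (forall_mem_image.1 hA) (forall_mem_image.1 hB)⟩

end Apply

theorem HolderWith.dimH_range_clm_apply_le {𝕜 X E F : Type*} [NontriviallyNormedField 𝕜]
    [MetricSpace X] [NormedAddCommGroup E] [NormedAddCommGroup F] [NormedSpace 𝕜 E]
    [NormedSpace 𝕜 F] [SecondCountableTopology (X × E)] {Φ : X → E →L[𝕜] F} {C r : ℝ≥0}
    (hΦ : HolderWith C r Φ) (hr₀ : 0 < r) (hr₁ : r ≤ 1) :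
    dimH (range fun q : X × E => Φ q.1 q.2) ≤ dimH (univ : Set (X × E)) / r :=
  dimH_range_le_of_locally_holder_on hr₀ (hΦ.exists_holderOnWith_clm_apply hr₁)

theorem dimH_univ_subtype_prod_le {E F : Type*} [NormedAddCommGroup E] [NormedSpace ℝ E]
    [FiniteDimensional ℝ E] [NormedAddCommGroup F] [NormedSpace ℝ F] [FiniteDimensional ℝ F]
    (s : Set E) :
    dimH (univ : Set (s × F)) ≤ Module.finrank ℝ E + Module.finrank ℝ F := by
  have hiso : Isometry fun q : s × F => ((q.1 : E), q.2) :=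
    isometry_subtype_coe.prodMap isometry_id
  calc dimH (univ : Set (s × F)) = dimH ((fun q : s × F => ((q.1 : E), q.2)) '' univ) :=
        (hiso.dimH_image _).symm
    _ ≤ dimH (univ : Set (E × F)) := dimH_mono (subset_univ _)
    _ = Module.finrank ℝ E + Module.finrank ℝ F := by
        rw [Real.dimH_univ_eq_finrank, Module.finrank_prod]; push_cast; rfl

/-- Stated on `m → n → 𝕜`, since `Matrix m n 𝕜` carries no norm instance. -/
noncomputable def matrixMulVecCLM (𝕜 m n : Type*) [NontriviallyNormedField 𝕜] [CompleteSpace 𝕜]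
    [Fintype m] [Fintype n] : (m → n → 𝕜) →L[𝕜] (n → 𝕜) →L[𝕜] (m → 𝕜) :=
  LinearMap.toContinuousLinearMap <| LinearMap.toContinuousLinearMap.toLinearMap ∘ₗ
    Matrix.mulVecBilin 𝕜 𝕜 ∘ₗ (Matrix.ofLinearEquiv 𝕜).toLinearMap

@[simp]
theorem matrixMulVecCLM_apply {𝕜 m n : Type*} [NontriviallyNormedField 𝕜] [CompleteSpace 𝕜]
    [Fintype m] [Fintype n] (A : m → n → 𝕜) (v : n → 𝕜) :
    matrixMulVecCLM 𝕜 m n A v = (Matrix.of A).mulVec v :=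
  rfl

theorem stmt11_general (d n k : ℕ) (α C : ℝ)
    (hα : 0 < α) (hα1 : α < 1) (hk : (d + n : ℝ) < α * k)
    (K : Set (Fin d → ℝ))
    (F : K → (Fin k → Fin n → ℝ))
    (hF : ∀ x y : K, dist (F x) (F y) ≤ C * dist x y ^ α) :
    (∀ c : ℝ, 0 ≤ c → ∀ y ∈ Set.range (fun p : K × (Fin n → ℝ) =>
        (Matrix.of (F p.1)).mulVec p.2),
      c • y ∈ Set.range (fun p : K × (Fin n → ℝ) => (Matrix.of (F p.1)).mulVec p.2)) ∧
    μH[k] (Set.range fun p : K × (Fin n → ℝ) => (Matrix.of (F p.1)).mulVec p.2) = 0 := by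
  refine ⟨fun c _ y ⟨p, hp⟩ => ⟨(p.1, c • p.2), by simp [← hp, Matrix.mulVec_smul]⟩, ?_⟩
  set r : ℝ≥0 := α.toNNReal
  have hr : (r : ℝ) = α := Real.coe_toNNReal α hα.le
  have hr₀ : 0 < r := Real.toNNReal_pos.2 hα
  have hr₁ : r ≤ 1 := by rw [← NNReal.coe_le_coe, hr]; exact hα1.le
  have hF' : HolderWith C.toNNReal r F := .of_dist_le fun x y => by
    rw [hr]
    exact (hF x y).trans (by gcongr; exact Real.le_coe_toNNReal C)
  have hdim_range : dimH (range fun q : K × (Fin n → ℝ) => (Matrix.of (F q.1)).mulVec q.2) ≤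
      dimH (univ : Set (K × (Fin n → ℝ))) / r := by
    simpa using ((matrixMulVecCLM ℝ (Fin k) (Fin n)).lipschitz.comp_holderWith
      hF').dimH_range_clm_apply_le hr₀ hr₁
  have hdim_univ : dimH (univ : Set (K × (Fin n → ℝ))) ≤ ((d + n : ℝ≥0) : ℝ≥0∞) := by
    simpa using dimH_univ_subtype_prod_le (F := Fin n → ℝ) K
  have hlt : ((d + n : ℝ≥0) : ℝ≥0∞) / r < (k : ℝ≥0) := by
    rw [← ENNReal.coe_div hr₀.ne', ENNReal.coe_lt_coe, div_lt_iff₀ hr₀, ← NNReal.coe_lt_coe]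
    push_cast [hr]
    linarith
  rw [← NNReal.coe_natCast]
  exact hausdorffMeasure_of_dimH_lt <| hdim_range.trans_lt <|
    (ENNReal.div_le_div_right hdim_univ _).trans_lt hlt

/-- For `F : K → ℝ^{k×n}` `α`-Hölder with each `F_x` injective and `αk > d + n`, the set
`⋃_{x∈K} range F_x = range f`, where `f(x,v) = F_x v`, is closed under multiplication by
nonnegative scalars and has zero `k`-dimensional Hausdorff measure. -/
theorem stmt11 (d n k : ℕ) (hd : 1 ≤ d) (hn : 1 ≤ n) (α C : ℝ)
    (hα : 0 < α) (hα1 : α < 1) (hC : 0 < C) (hk : (d + n : ℝ) < α * k)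
    (K : Set (Fin d → ℝ)) (hK : IsCompact K)
    (F : K → (Fin k → Fin n → ℝ))
    (hF : ∀ x y : K, dist (F x) (F y) ≤ C * dist x y ^ α)
    (hFinj : ∀ x : K, Function.Injective fun v => (Matrix.of (F x)).mulVec v) :
    (∀ c : ℝ, 0 ≤ c → ∀ y ∈ Set.range (fun p : K × (Fin n → ℝ) =>
        (Matrix.of (F p.1)).mulVec p.2),
      c • y ∈ Set.range (fun p : K × (Fin n → ℝ) => (Matrix.of (F p.1)).mulVec p.2)) ∧
    μH[k] (Set.range fun p : K × (Fin n → ℝ) => (Matrix.of (F p.1)).mulVec p.2) = 0 :=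
  stmt11_general d n k α C hα hα1 hk K F hF
end
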